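/- arXiv:1708.07831 — 4 statements merged into one kernel-verified Lean document; each statement's English description precedes it below -/
import Mathlib

section
/- Let m be odd. There exists a function f from ordered pairs of distinct elements of Sym(m) to {1,...,m} such that f(x,y) = f(y,x) for all x ≠ y, and f(xg, yg) = g(f(x,y)) for all x ≠ y and all g in Sym(m). -/
/-!
Put `f x y = x (F (x⁻¹ * y))` (`pairColouring`). Both properties reduce to the single identity
`F w = w (F w⁻¹)`, to be satisfied by some `F : Sym(m) → {1,…,m}`. On a pair `{w, w⁻¹}` with
`w ≠ w⁻¹` one value of `F` may be chosen freely and determines the other; for an involution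
`w = w⁻¹` the identity asks for a fixed point of `w`, which exists because `m` is odd.
-/

section

variable {G α : Type*} [Group G] [MulAction G α]

theorem exists_forall_eq_smul_apply_inv (hfix : ∀ w : G, w⁻¹ = w → ∃ a : α, w • a = a) :
    ∃ F : G → α, ∀ w, F w = w • F w⁻¹ := by
  classical
  let _ : LinearOrder G := WellOrderingRel.isWellOrder.linearOrder
  obtain ⟨a, -⟩ := hfix 1 inv_one
  choose fix hfix using hfix
  refine ⟨fun w => if h : w⁻¹ = w then fix w h else if w < w⁻¹ then a else w • a, fun w => ?_⟩
  by_cases hw : w⁻¹ = w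
  · simp [hw, hfix]
  · rcases lt_or_gt_of_ne (Ne.symm hw) with hlt | hgt
    · simp [hw, Ne.symm hw, hlt, hlt.not_gt]
    · simp [hw, Ne.symm hw, hgt, hgt.not_gt]

def pairColouring (F : G → α) (x y : G) : α :=
  x • F (x⁻¹ * y)

theorem pairColouring_comm {F : G → α} (hF : ∀ w, F w = w • F w⁻¹) (x y : G) :
    pairColouring F x y = pairColouring F y x := by
  rw [pairColouring, hF, mul_inv_rev, inv_inv, smul_smul, mul_inv_cancel_left, pairColouring]

theorem pairColouring_mul_mul (F : G → α) (g x y : G) :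
    pairColouring F (g * x) (g * y) = g • pairColouring F x y := by
  rw [pairColouring, pairColouring, mul_smul, mul_inv_rev, mul_assoc, inv_mul_cancel_left]

end

theorem Equiv.Perm.exists_fixed_point_of_odd_card {α : Type*} [Fintype α]
    (hα : Odd (Fintype.card α)) {σ : Perm α} (hσ : σ⁻¹ = σ) : ∃ a, σ a = a :=
  have : Fact (Nat.Prime 2) := ⟨Nat.prime_two⟩
  exists_fixed_point_of_prime (p := 2) (n := 1) hα.not_two_dvd_nat
    (by rw [pow_one, sq, mul_eq_one_iff_eq_inv, hσ])

/-- In Mathlib's composition convention the right translate `xg` of the paper is `g * x`,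
since `(g * x) c = g (x c)`. -/
theorem exists_equivariant_colouring (m : ℕ) (hm : Odd m) :
    ∃ f : Equiv.Perm (Fin m) → Equiv.Perm (Fin m) → Fin m,
      (∀ x y, x ≠ y → f x y = f y x) ∧
      (∀ x y, x ≠ y → ∀ g : Equiv.Perm (Fin m), f (g * x) (g * y) = g (f x y)) := by
  obtain ⟨F, hF⟩ := exists_forall_eq_smul_apply_inv (α := Fin m) fun _ =>
    Equiv.Perm.exists_fixed_point_of_odd_card (by rwa [Fintype.card_fin])
  exact ⟨pairColouring F, fun x y _ => pairColouring_comm hF x y,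
    fun x y _ g => pairColouring_mul_mul F g x y⟩
end

section
/- If m is even, then for every permutation s of the vertices of an m-edge-colored countable complete graph that induces the color permutation (1 2)(3 4)···(m−1 m) on colors, s cannot be an involution without fixed edges of fixed color; in particular, the extension Aut*(R_m) of Aut(R_m) by Sym(m) does not split for even m. -/
/-! An involution `s` of the vertices always maps some edge `{u, v}` onto itself: either it
swaps a pair `v ↔ s v`, or it is the identity and fixes every edge. The colour of that edge is
then fixed by the colour permutation `π` it induces. -/

open Equiv Function

namespace Equiv.Perm

theorem involutive_of_sq_eq_one {V : Type*} {s : Perm V} (hs : s ^ 2 = 1) : Involutive s :=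
  fun v => by rw [← Perm.mul_apply, ← sq, hs, Perm.one_apply]

end Equiv.Perm

section InducedColourPermutation

variable {V C : Type*} {c : V → V → C} {π : Perm C} {s : Perm V}

theorem apply_colour_swapped_edge (hsymm : ∀ u v, c u v = c v u) (hs : Involutive s)
    (hind : ∀ u v, u ≠ v → c (s u) (s v) = π (c u v)) {v : V} (hv : s v ≠ v) :
    π (c v (s v)) = c v (s v) := by
  rw [← hind v (s v) hv.symm, hs v, hsymm]

theorem apply_colour_fixed_edge (hind : ∀ u v, u ≠ v → c (s u) (s v) = π (c u v))
    {u v : V} (huv : u ≠ v) (hu : s u = u) (hv : s v = v) : π (c u v) = c u v := by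
  rw [← hind u v huv, hu, hv]

theorem exists_colour_fixed_of_involutive [Nontrivial V] (hsymm : ∀ u v, c u v = c v u)
    (hs : Involutive s) (hind : ∀ u v, u ≠ v → c (s u) (s v) = π (c u v)) :
    ∃ i, π i = i := by
  by_cases hmoved : ∃ v, s v ≠ v
  · obtain ⟨v, hv⟩ := hmoved
    exact ⟨_, apply_colour_swapped_edge hsymm hs hind hv⟩
  · push Not at hmoved
    obtain ⟨u, v, huv⟩ := exists_pair_ne V
    exact ⟨_, apply_colour_fixed_edge hind huv (hmoved u) (hmoved v)⟩

end InducedColourPermutation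

theorem no_involution_induces_fpf_colour_involution_general (m : ℕ)
    (V : Type*) [Infinite V]
    (c : V → V → Fin m) (hsymm : ∀ u v : V, c u v = c v u)
    (π : Equiv.Perm (Fin m)) (hπfpf : ∀ i : Fin m, π i ≠ i)
    (s : Equiv.Perm V) (hs : s ^ 2 = 1)
    (hind : ∀ u v : V, u ≠ v → c (s u) (s v) = π (c u v)) :
    False := by
  obtain ⟨i, hi⟩ :=
    exists_colour_fixed_of_involutive hsymm (Perm.involutive_of_sq_eq_one hs) hind
  exact hπfpf i hi

/-- Key obstruction to splitting for even `m`: a fixed-point-free involution `π` of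
the colours cannot be induced by any involution `s` of the vertices of an
`m`-edge-coloured countable complete graph.  (In particular the extension
`Aut*(R_m)` of `Aut(R_m)` by `Sym(m)` does not split when `m` is even.) -/
theorem no_involution_induces_fpf_colour_involution (m : ℕ) (hm : Even m)
    (V : Type*) [Countable V] [Infinite V]
    (c : V → V → Fin m) (hsymm : ∀ u v : V, c u v = c v u)
    (π : Equiv.Perm (Fin m)) (hπ : π ^ 2 = 1) (hπfpf : ∀ i : Fin m, π i ≠ i)
    (s : Equiv.Perm V) (hs : s ^ 2 = 1)
    (hind : ∀ u v : V, u ≠ v → c (s u) (s v) = π (c u v)) :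
    False :=
  no_involution_induces_fpf_colour_involution_general m V c hsymm π hπfpf s hs hind
end

section
/- Given disjoint finite sets U_1, ..., U_m of vertices in a countably infinite vertex set, the set of m-edge-colorings of the complete graph that contain a vertex v joined by color i to every vertex of U_i for each i is dense and open in the product topology on colorings. -/
/-!
Both properties hold because membership only involves finitely many edges. The set is open
because a witness vertex `v` keeps working for every colouring that agrees with `c` on the
finitely many edges `v u`, `u ∈ ⋃ U i`. It is dense because, given any colouring and finitely
many edges, a vertex `v` outside all `U i` and all those edges exists since `V` is infinite;
recolouring only the edges at `v`, giving `v u` colour `i` for `u ∈ U i` (well defined since the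
`U i` are disjoint), leaves the prescribed edges untouched.
-/

open Filter Function Topology

section ProductTopology

variable {ι : Type*} {π : ι → Type*} [∀ i, TopologicalSpace (π i)]

theorem setOf_forall_mem_apply_eq_mem_nhds [∀ i, DiscreteTopology (π i)]
    (f : ∀ i, π i) {I : Set ι} (hI : I.Finite) : {g | ∀ i ∈ I, g i = f i} ∈ 𝓝 f :=
  set_pi_mem_nhds (s := fun i => {f i}) hI fun _ _ => mem_nhds_discrete.mpr rfl

theorem dense_of_forall_finset_exists_eqOn {A : Set (∀ i, π i)}
    (h : ∀ (f : ∀ i, π i) (I : Finset ι), ∃ g ∈ A, ∀ i ∈ I, g i = f i) : Dense A := by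
  refine dense_iff_inter_open.mpr fun O hO ⟨f, hf⟩ => ?_
  obtain ⟨I, u, hfu, hO⟩ := isOpen_pi_iff.mp hO f hf
  obtain ⟨g, hgA, hgf⟩ := h f I
  exact ⟨g, hO fun i hi => hgf i hi ▸ (hfu i hi).2, hgA⟩

end ProductTopology

theorem Pairwise.exists_forall_mem_eq {ι α : Type*} [Nonempty ι] {U : ι → Set α}
    (hU : Pairwise (Disjoint on U)) : ∃ κ : α → ι, ∀ i, ∀ a ∈ U i, κ a = i := by
  classical
  refine ⟨fun a => if h : ∃ i, a ∈ U i then h.choose else Classical.arbitrary ι,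
    fun i a ha => ?_⟩
  have h : ∃ i, a ∈ U i := ⟨i, ha⟩
  refine (dif_pos h).trans ?_
  by_contra hne
  exact Set.disjoint_left.mp (hU hne) h.choose_spec ha

section EdgeColouring

variable {ι V : Type*}

noncomputable def recolourStar [DecidableEq V] (f : Sym2 V → ι) (v : V) (κ : V → ι) :
    Sym2 V → ι :=
  fun e => if h : v ∈ e then κ (Sym2.Mem.other h) else f e

theorem recolourStar_mk_left [DecidableEq V] (f : Sym2 V → ι) (v u : V) (κ : V → ι) :
    recolourStar f v κ s(v, u) = κ u := by
  refine (dif_pos (Sym2.mem_mk_left v u)).trans ?_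
  rw [Sym2.congr_right.mp (Sym2.other_spec _)]

theorem recolourStar_of_notMem [DecidableEq V] (f : Sym2 V → ι) {v : V} (κ : V → ι) {e : Sym2 V}
    (h : v ∉ e) :
    recolourStar f v κ e = f e :=
  dif_neg h

def extensionSet (U : ι → Finset V) : Set (Sym2 V → ι) :=
  {c | ∃ v, (∀ i, v ∉ U i) ∧ ∀ i, ∀ u ∈ U i, c s(v, u) = i}

variable [Finite ι] [TopologicalSpace ι]

theorem isOpen_extensionSet [DiscreteTopology ι] (U : ι → Finset V) :
    IsOpen (extensionSet U) := by
  refine isOpen_iff_mem_nhds.mpr fun c ⟨v, hvU, hvc⟩ => ?_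
  have hstar : ((fun u => s(v, u)) '' ⋃ i, (U i : Set V)).Finite :=
    (Set.finite_iUnion fun i => (U i).finite_toSet).image _
  filter_upwards [setOf_forall_mem_apply_eq_mem_nhds c hstar] with g hg
  refine ⟨v, hvU, fun i u hu => ?_⟩
  rw [hg _ (Set.mem_image_of_mem _ (Set.mem_iUnion_of_mem i hu))]
  exact hvc i u hu

theorem dense_extensionSet [Infinite V] {U : ι → Finset V} (hU : Pairwise (Disjoint on U)) :
    Dense (extensionSet U) := by
  classical
  have := Fintype.ofFinite ι
  refine dense_of_forall_finset_exists_eqOn fun f I => ?_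
  obtain ⟨v, hv⟩ :=
    Infinite.exists_notMem_finset (Finset.univ.biUnion U ∪ I.biUnion Sym2.toFinset)
  simp only [Finset.mem_union, Finset.mem_biUnion, Finset.mem_univ, true_and, Sym2.mem_toFinset,
    not_or, not_exists, not_and] at hv
  have : Nonempty ι := ⟨f s(v, v)⟩
  obtain ⟨κ, hκ⟩ := Pairwise.exists_forall_mem_eq (U := fun i => (U i : Set V))
    fun i j hij => Finset.disjoint_coe.mpr (hU hij)
  refine ⟨recolourStar f v κ, ⟨v, hv.1, fun i u hu => ?_⟩,
    fun e he => recolourStar_of_notMem f κ (hv.2 e he)⟩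
  rw [recolourStar_mk_left]
  exact hκ i u hu

end EdgeColouring

theorem extension_set_open_dense_general
    (m : ℕ) {V : Type*} [Infinite V]
    (U : Fin m → Finset V)
    (hU : ∀ i j : Fin m, i ≠ j → Disjoint (U i) (U j)) :
    IsOpen {c : Sym2 V → Fin m |
        ∃ v : V, (∀ i, v ∉ U i) ∧ ∀ i : Fin m, ∀ u ∈ U i, c s(v, u) = i} ∧
    Dense {c : Sym2 V → Fin m |
        ∃ v : V, (∀ i, v ∉ U i) ∧ ∀ i : Fin m, ∀ u ∈ U i, c s(v, u) = i} :=
  ⟨isOpen_extensionSet U, dense_extensionSet fun i j hij => hU i j hij⟩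

/-- Given pairwise disjoint finite sets `U 1, …, U m` of vertices of a countably
infinite set `V`, the set of `m`-edge-colourings (functions from unordered pairs to
colours) admitting a vertex `v` joined by colour `i` to each vertex of `U i` is open
and dense in the product topology. -/
theorem extension_set_open_dense
    (m : ℕ) {V : Type*} [Countable V] [Infinite V] [DecidableEq V]
    (U : Fin m → Finset V)
    (hU : ∀ i j : Fin m, i ≠ j → Disjoint (U i) (U j)) :
    IsOpen {c : Sym2 V → Fin m |
        ∃ v : V, (∀ i, v ∉ U i) ∧ ∀ i : Fin m, ∀ u ∈ U i, c s(v, u) = i} ∧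
    Dense {c : Sym2 V → Fin m |
        ∃ v : V, (∀ i, v ∉ U i) ∧ ∀ i : Fin m, ∀ u ∈ U i, c s(v, u) = i} :=
  extension_set_open_dense_general m U hU
end

section
/- If an m-edge-coloring of the countable complete graph satisfies the extension property, then every color-preserving isomorphism between finite induced subgraphs extends to a color-preserving automorphism of the whole graph (homogeneity). -/
/-! Back and forth. A finite colour-preserving partial bijection `P` can be extended so that
any given vertex `v` enters its domain: the extension property, applied to the sets
`U i = P '' {a ∈ dom P | c v a = i}`, yields a fresh vertex `w` whose colours towards `P a`
are those of `v` towards `a`, and we send `v ↦ w`. Applied to the inverse this puts `v` into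
the range as well. Alternating the two steps along an enumeration of `V` gives an increasing
chain of partial isomorphisms whose union is a colour-preserving permutation. -/

open Set Function

section

variable {m : ℕ} {V : Type*}

def HasExtensionProperty (c : V → V → Fin m) : Prop :=
  ∀ U : Fin m → Finset V, (∀ i j : Fin m, i ≠ j → Disjoint (U i) (U j)) →
    ∃ v : V, (∀ i, v ∉ U i) ∧ ∀ i : Fin m, ∀ u ∈ U i, c v u = i

lemma HasExtensionProperty.nonempty {c : V → V → Fin m} (hc : HasExtensionProperty c) :
    Nonempty V :=
  let ⟨v, _⟩ := hc (fun _ => ∅) (by simp)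
  ⟨v⟩

structure ColorPartialIso (c : V → V → Fin m) extends PartialEquiv V V where
  finite_source : source.Finite
  map_color : ∀ u ∈ source, ∀ v ∈ source, u ≠ v →
    c (toPartialEquiv u) (toPartialEquiv v) = c u v

namespace ColorPartialIso

variable {c : V → V → Fin m}

instance : CoeFun (ColorPartialIso c) fun _ => V → V := ⟨fun P => P.toPartialEquiv⟩

instance : Preorder (ColorPartialIso c) where
  le P Q := P.source ⊆ Q.source ∧ EqOn P Q P.source
  le_refl P := ⟨subset_rfl, eqOn_refl _ _⟩
  le_trans P Q R hPQ hQR := ⟨hPQ.1.trans hQR.1, hPQ.2.trans (hQR.2.mono hPQ.1)⟩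

variable {P Q : ColorPartialIso c}

def symm (P : ColorPartialIso c) : ColorPartialIso c where
  toPartialEquiv := P.toPartialEquiv.symm
  finite_source := (P.image_source_eq_target ▸ P.finite_source.image P : P.target.Finite)
  map_color u hu v hv huv := by
    have := P.map_color _ (P.map_target hu) _ (P.map_target hv)
      (P.toPartialEquiv.symm.injOn.ne hu hv huv)
    rwa [P.right_inv hu, P.right_inv hv, eq_comm] at this

lemma le_symm_of_symm_le (h : P.symm ≤ Q) : P ≤ Q.symm := by
  have hQP : ∀ x ∈ P.source, Q (P x) = x := fun x hx =>
    (h.2 (P.map_source hx)).symm.trans (P.left_inv hx)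
  refine ⟨fun x hx => ?_, fun x hx => ?_⟩
  · exact hQP x hx ▸ Q.map_source (h.1 (P.map_source hx))
  · exact (hQP x hx ▸ Q.left_inv (h.1 (P.map_source hx))).symm

open scoped Classical in
noncomputable def insert (hcs : ∀ u v : V, c u v = c v u) (P : ColorPartialIso c) {v w : V}
    (hv : v ∉ P.source) (hw : w ∉ P.target) (hvw : ∀ a ∈ P.source, c w (P a) = c v a) :
    ColorPartialIso c where
  toPartialEquiv := P.toPartialEquiv.disjointUnion (.single v w)
    (disjoint_singleton_right.2 hv) (disjoint_singleton_right.2 hw)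
  finite_source := P.finite_source.union (finite_singleton v)
  map_color := by
    rintro a ha b hb hab
    simp only [PartialEquiv.disjointUnion, PartialEquiv.copy, PartialEquiv.piecewise,
      mem_union] at ha hb ⊢
    rcases ha with ha | rfl <;> rcases hb with hb | rfl
    · simpa [ha, hb] using P.map_color a ha b hb hab
    · simpa [ha, hv, hcs] using hvw a ha
    · simpa [hv, hb] using hvw b hb
    · exact absurd rfl hab

lemma le_insert (hcs : ∀ u v : V, c u v = c v u) (P : ColorPartialIso c) {v w : V}
    (hv : v ∉ P.source) (hw : w ∉ P.target) (hvw : ∀ a ∈ P.source, c w (P a) = c v a) :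
    P ≤ P.insert hcs hv hw hvw :=
  ⟨subset_union_left, fun a ha => by simp [insert, PartialEquiv.disjointUnion, ha]⟩

lemma mem_insert_source (hcs : ∀ u v : V, c u v = c v u) (P : ColorPartialIso c) {v w : V}
    (hv : v ∉ P.source) (hw : w ∉ P.target) (hvw : ∀ a ∈ P.source, c w (P a) = c v a) :
    v ∈ (P.insert hcs hv hw hvw).source :=
  subset_union_right rfl

theorem exists_notMem_target_color_eq (hc : HasExtensionProperty c) (P : ColorPartialIso c)
    (v : V) : ∃ w ∉ P.target, ∀ a ∈ P.source, c w (P a) = c v a := by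
  classical
  have hS (a : V) : a ∈ P.finite_source.toFinset ↔ a ∈ P.source := Finite.mem_toFinset _
  let U (i : Fin m) := (P.finite_source.toFinset.filter (c v · = i)).image P
  have hU (a : V) (ha : a ∈ P.source) : P a ∈ U (c v a) :=
    Finset.mem_image_of_mem _ (by simpa [hS])
  have hdisj (i j : Fin m) (hij : i ≠ j) : Disjoint (U i) (U j) := by
    simp only [U, Finset.disjoint_left, Finset.mem_image, Finset.mem_filter, hS]
    rintro _ ⟨a, ⟨ha, rfl⟩, rfl⟩ ⟨b, ⟨hb, rfl⟩, hba⟩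
    exact hij (P.injOn ha hb hba.symm ▸ rfl)
  obtain ⟨w, hwU, hw⟩ := hc U hdisj
  refine ⟨w, fun hwt => ?_, fun a ha => hw _ _ (hU a ha)⟩
  obtain ⟨a, ha, rfl⟩ := P.image_source_eq_target.symm ▸ hwt
  exact hwU _ (hU a ha)

theorem exists_le_mem_source (hcs : ∀ u v : V, c u v = c v u) (hc : HasExtensionProperty c)
    (P : ColorPartialIso c) (v : V) : ∃ Q, P ≤ Q ∧ v ∈ Q.source := by
  by_cases hv : v ∈ P.source
  · exact ⟨P, le_rfl, hv⟩
  obtain ⟨w, hw, hvw⟩ := P.exists_notMem_target_color_eq hc v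
  exact ⟨P.insert hcs hv hw hvw, P.le_insert hcs hv hw hvw, P.mem_insert_source hcs hv hw hvw⟩

theorem exists_le_mem_source_mem_target (hcs : ∀ u v : V, c u v = c v u)
    (hc : HasExtensionProperty c) (P : ColorPartialIso c) (v : V) :
    ∃ Q, P ≤ Q ∧ v ∈ Q.source ∧ v ∈ Q.target := by
  obtain ⟨Q, hPQ, hvQ⟩ := P.exists_le_mem_source hcs hc v
  obtain ⟨R, hQR, hvR⟩ := Q.symm.exists_le_mem_source hcs hc v
  exact ⟨R.symm, hPQ.trans (le_symm_of_symm_le hQR), (le_symm_of_symm_le hQR).1 hvQ, hvR⟩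

theorem exists_perm_of_directed {ι : Type*} (P : ι → ColorPartialIso c)
    (hP : Directed (· ≤ ·) P) (hsource : ∀ v, ∃ i, v ∈ (P i).source)
    (htarget : ∀ v, ∃ i, v ∈ (P i).target) :
    ∃ g : Equiv.Perm V, (∀ i, EqOn g (P i) (P i).source) ∧
      ∀ u v, u ≠ v → c (g u) (g v) = c u v := by
  choose idx hidx using hsource
  have hcommon (u v : V) : ∃ k, u ∈ (P k).source ∧ v ∈ (P k).source :=
    let ⟨k, hk₁, hk₂⟩ := hP (idx u) (idx v)
    ⟨k, hk₁.1 (hidx u), hk₂.1 (hidx v)⟩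
  let g : V → V := fun v => P (idx v) v
  have hg (i : ι) : EqOn g (P i) (P i).source := fun v hv =>
    let ⟨k, hk₁, hk₂⟩ := hP (idx v) i
    (hk₁.2 (hidx v)).trans (hk₂.2 hv).symm
  have hbij : Bijective g := by
    refine ⟨fun u v huv => ?_, fun w => ?_⟩
    · obtain ⟨k, hu, hv⟩ := hcommon u v
      exact (P k).injOn hu hv (by rwa [← hg k hu, ← hg k hv])
    · obtain ⟨i, hw⟩ := htarget w
      exact ⟨_, (hg i ((P i).map_target hw)).trans ((P i).right_inv hw)⟩
  refine ⟨Equiv.ofBijective g hbij, hg, fun u v huv => ?_⟩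
  obtain ⟨k, hu, hv⟩ := hcommon u v
  simpa [hg k hu, hg k hv] using (P k).map_color u hu v hv huv

theorem exists_perm_extending [Countable V] {c : V → V → Fin m}
    (hcs : ∀ u v : V, c u v = c v u) (hc : HasExtensionProperty c) (P₀ : ColorPartialIso c) :
    ∃ g : Equiv.Perm V, EqOn g P₀ P₀.source ∧ ∀ u v, u ≠ v → c (g u) (g v) = c u v := by
  have := hc.nonempty
  obtain ⟨e, he⟩ := exists_surjective_nat V
  choose next le_next mem_source_next mem_target_next using
    exists_le_mem_source_mem_target hcs hc
  let P : ℕ → ColorPartialIso c := fun n => n.rec P₀ fun k Pk => next Pk (e k)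
  have hP : Monotone P := monotone_nat_of_le_succ fun n => le_next _ _
  obtain ⟨g, hgP, hg⟩ := exists_perm_of_directed P hP.directed_le
    (fun v => let ⟨n, hn⟩ := he v; ⟨n + 1, hn ▸ mem_source_next _ _⟩)
    (fun v => let ⟨n, hn⟩ := he v; ⟨n + 1, hn ▸ mem_target_next _ _⟩)
  exact ⟨g, hgP 0, hg⟩

end ColorPartialIso

end

theorem extension_property_homogeneous_general
    (m : ℕ) {V : Type*} [Countable V]
    (c : V → V → Fin m) (hcs : ∀ u v : V, c u v = c v u)
    (hc : ∀ U : Fin m → Finset V, (∀ i j : Fin m, i ≠ j → Disjoint (U i) (U j)) →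
      ∃ v : V, (∀ i, v ∉ U i) ∧ ∀ i : Fin m, ∀ u ∈ U i, c v u = i)
    (A B : Finset V) (φ : V → V) (hφ : Set.BijOn φ (A : Set V) (B : Set V))
    (hφc : ∀ u ∈ A, ∀ v ∈ A, u ≠ v → c (φ u) (φ v) = c u v) :
    ∃ g : Equiv.Perm V, (∀ u ∈ A, g u = φ u) ∧
      ∀ u v : V, u ≠ v → c (g u) (g v) = c u v := by
  have := HasExtensionProperty.nonempty hc
  obtain ⟨g, hgφ, hg⟩ :=
    ColorPartialIso.exists_perm_extending hcs hc ⟨hφ.toPartialEquiv φ A B, A.finite_toSet, hφc⟩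
  exact ⟨g, fun u hu => hgφ hu, hg⟩

/-- Homogeneity: if an `m`-edge-colouring of the complete graph on a countably
infinite vertex set satisfies the extension property, then every colour-preserving
isomorphism between finite induced subgraphs extends to a colour-preserving
automorphism of the whole graph. -/
theorem extension_property_homogeneous
    (m : ℕ) {V : Type*} [Countable V] [Infinite V]
    (c : V → V → Fin m) (hcs : ∀ u v : V, c u v = c v u)
    (hc : ∀ U : Fin m → Finset V, (∀ i j : Fin m, i ≠ j → Disjoint (U i) (U j)) →
      ∃ v : V, (∀ i, v ∉ U i) ∧ ∀ i : Fin m, ∀ u ∈ U i, c v u = i)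
    (A B : Finset V) (φ : V → V) (hφ : Set.BijOn φ (A : Set V) (B : Set V))
    (hφc : ∀ u ∈ A, ∀ v ∈ A, u ≠ v → c (φ u) (φ v) = c u v) :
    ∃ g : Equiv.Perm V, (∀ u ∈ A, g u = φ u) ∧
      ∀ u v : V, u ≠ v → c (g u) (g v) = c u v :=
  extension_property_homogeneous_general m c hcs hc A B φ hφ hφc
end
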